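/- Let p > 2 and let F be harmonic on the upper half-plane H with ∫_H |∇F(z)|^p y^{p-2} dm(z) = ‖F‖^p < ∞. Then for every bounded interval I ⊂ ℝ with Carleson box Q_I = I × (0,|I|), one has ∫_{Q_I} |∇F(z)|² y dm(z) ≤ C ‖F‖² |I| for a constant C depending only on p. -/

import Mathlib

/-!
Write `y = y ^ (2(p-2)/p) · y ^ ((4-p)/p)` and apply Hölder's inequality on the box `Q_I` with the
conjugate exponents `p/2` and `p/(p-2)`: the first factor is at most `‖F‖²`, and the second is
`(∫_{Q_I} y ^ ((4-p)/(p-2)))^((p-2)/p) = ((p-2)/2 · |I| ^ (p/(p-2)))^((p-2)/p)`,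
a constant times `|I|`.
-/

open MeasureTheory Complex Filter Set Metric
open scoped ENNReal Real Topology

noncomputable section

/-- The upper half plane in `ℂ`. -/
def UHP : Set ℂ := {z : ℂ | 0 < z.im}

/-- `F` is harmonic on `s`: it is `C²` and its Laplacian vanishes on `s`. -/
def IsHarmonicOn (F : ℂ → ℝ) (s : Set ℂ) : Prop :=
  ContDiffOn ℝ 2 F s ∧ ∀ z ∈ s,
    iteratedFDeriv ℝ 2 F z ![1, 1] + iteratedFDeriv ℝ 2 F z ![Complex.I, Complex.I] = 0

/-- The first-order Besov energy `I_p^1(F, ℍ) = ∫_ℍ |∇F|^p y^(p-2) dm`. -/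
def besovEnergy (p : ℝ) (F : ℂ → ℝ) : ℝ≥0∞ :=
  ∫⁻ z in UHP, ENNReal.ofReal (‖fderiv ℝ F z‖ ^ p * z.im ^ (p - 2))

/-- The Carleson box over the interval `(a, b)`. -/
def carlesonBox (a b : ℝ) : Set ℂ :=
  {z : ℂ | z.re ∈ Set.Ioo a b ∧ z.im ∈ Set.Ioo 0 (b - a)}

lemma lintegral_Ioo_rpow {L α : ℝ} (hL : 0 < L) (hα : -1 < α) :
    ∫⁻ y in Ioo 0 L, ENNReal.ofReal (y ^ α) = ENNReal.ofReal (L ^ (α + 1) / (α + 1)) := by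
  have hint : IntegrableOn (fun y : ℝ => y ^ α) (Ioo 0 L) := by
    have := intervalIntegral.intervalIntegrable_rpow' (a := 0) (b := L) hα
    rw [intervalIntegrable_iff_integrableOn_Ioc_of_le hL.le] at this
    exact this.mono_set Ioo_subset_Ioc_self
  rw [← ofReal_integral_eq_lintegral_ofReal hint
      ((ae_restrict_iff' measurableSet_Ioo).2 (ae_of_all _ fun y hy => Real.rpow_nonneg hy.1.le α)),
    ← integral_Ioc_eq_integral_Ioo, ← intervalIntegral.integral_of_le hL.le,
    integral_rpow (Or.inl hα), Real.zero_rpow (by linarith), sub_zero]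

lemma measurableSet_carlesonBox (a b : ℝ) : MeasurableSet (carlesonBox a b) :=
  (measurableSet_Ioo.preimage measurable_re).inter (measurableSet_Ioo.preimage measurable_im)

lemma setLIntegral_carlesonBox_comp_im (a b : ℝ) {h : ℝ → ℝ≥0∞} (hh : Measurable h) :
    ∫⁻ z in carlesonBox a b, h z.im = ENNReal.ofReal (b - a) * ∫⁻ y in Ioo 0 (b - a), h y := by
  have himage : measurableEquivRealProd '' carlesonBox a b = Ioo a b ×ˢ Ioo 0 (b - a) := by
    rw [MeasurableEquiv.image_eq_preimage_symm]
    ext x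
    simp [carlesonBox, measurableEquivRealProd]
  calc ∫⁻ z in carlesonBox a b, h z.im = ∫⁻ x in Ioo a b ×ˢ Ioo 0 (b - a), h x.2 := by
        rw [← himage]
        exact volume_preserving_equiv_real_prod.setLIntegral_comp_emb
          measurableEquivRealProd.measurableEmbedding (fun x => h x.2) _
    _ = ENNReal.ofReal (b - a) * ∫⁻ y in Ioo 0 (b - a), h y := by
        rw [Measure.volume_eq_prod, ← Measure.prod_restrict,
          lintegral_prod (fun x => h x.2) (hh.comp measurable_snd).aemeasurable]
        simp [lintegral_const, Real.volume_Ioo, mul_comm]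

lemma setLIntegral_carlesonBox_im_rpow {a b α : ℝ} (hab : a < b) (hα : -1 < α) :
    ∫⁻ z in carlesonBox a b, ENNReal.ofReal (z.im ^ α) =
      ENNReal.ofReal ((b - a) ^ (α + 2) / (α + 1)) := by
  have hL : 0 < b - a := sub_pos.2 hab
  rw [setLIntegral_carlesonBox_comp_im a b (h := fun y => ENNReal.ofReal (y ^ α)) (by fun_prop),
    lintegral_Ioo_rpow hL hα,
    ← ENNReal.ofReal_mul hL.le, ← mul_div_assoc, ← Real.rpow_one_add' hL.le (by linarith)]
  ring_nf

lemma lintegral_sq_mul_le_besov {X : Type*} [MeasurableSpace X] (μ : Measure X) {p : ℝ}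
    (hp : 2 < p) {g y : X → ℝ} (hg : AEMeasurable g μ) (hy : AEMeasurable y μ)
    (hg₀ : ∀ᵐ x ∂μ, 0 ≤ g x) (hy₀ : ∀ᵐ x ∂μ, 0 < y x) :
    ∫⁻ x, ENNReal.ofReal (g x ^ 2 * y x) ∂μ ≤
      (∫⁻ x, ENNReal.ofReal (g x ^ p * y x ^ (p - 2)) ∂μ) ^ (2 / p) *
        (∫⁻ x, ENNReal.ofReal (y x ^ (p / (p - 2) - 2)) ∂μ) ^ ((p - 2) / p) := by
  have hp₀ : 0 < p := by linarith
  have hp₂ : 0 < p - 2 := by linarith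
  have hpq : (p / 2).HolderConjugate (p / (p - 2)) :=
    Real.holderConjugate_iff.2 ⟨by rw [lt_div_iff₀ two_pos]; linarith, by field_simp; ring⟩
  set f₁ : X → ℝ≥0∞ := fun x => ENNReal.ofReal (g x ^ 2 * y x ^ (2 * (p - 2) / p))
  set f₂ : X → ℝ≥0∞ := fun x => ENNReal.ofReal (y x ^ ((4 - p) / p))
  have holder := ENNReal.lintegral_mul_le_Lp_mul_Lq μ hpq (by fun_prop : AEMeasurable f₁ μ)
    (by fun_prop : AEMeasurable f₂ μ)
  rw [one_div_div, one_div_div] at holder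
  have hsplit : ∀ᵐ x ∂μ, ENNReal.ofReal (g x ^ 2 * y x) = (f₁ * f₂) x := by
    filter_upwards [hg₀, hy₀] with x hgx hyx
    have hexp : 2 * (p - 2) / p + (4 - p) / p = 1 := by field_simp; ring
    rw [Pi.mul_apply, ← ENNReal.ofReal_mul (by positivity), mul_assoc, ← Real.rpow_add hyx, hexp,
      Real.rpow_one]
  have henergy : ∀ᵐ x ∂μ, f₁ x ^ (p / 2) = ENNReal.ofReal (g x ^ p * y x ^ (p - 2)) := by
    filter_upwards [hg₀, hy₀] with x hgx hyx
    have hexp₁ : ((2 : ℕ) : ℝ) * (p / 2) = p := by push_cast; ring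
    have hexp₂ : 2 * (p - 2) / p * (p / 2) = p - 2 := by field_simp
    rw [ENNReal.ofReal_rpow_of_nonneg (by positivity) (by positivity),
      Real.mul_rpow (by positivity) (by positivity), ← Real.rpow_natCast,
      ← Real.rpow_mul hgx, ← Real.rpow_mul hyx.le, hexp₁, hexp₂]
  have hweight : ∀ᵐ x ∂μ, f₂ x ^ (p / (p - 2)) = ENNReal.ofReal (y x ^ (p / (p - 2) - 2)) := by
    filter_upwards [hy₀] with x hyx
    have hexp : (4 - p) / p * (p / (p - 2)) = p / (p - 2) - 2 := by field_simp; ring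
    rw [ENNReal.ofReal_rpow_of_nonneg (by positivity) (by positivity), ← Real.rpow_mul hyx.le, hexp]
  rwa [lintegral_congr_ae hsplit, ← lintegral_congr_ae henergy, ← lintegral_congr_ae hweight]

lemma setLIntegral_carlesonBox_weight_rpow {p a b : ℝ} (hp : 2 < p) (hab : a < b) :
    (∫⁻ z in carlesonBox a b, ENNReal.ofReal (z.im ^ (p / (p - 2) - 2))) ^ ((p - 2) / p) =
      ENNReal.ofReal (((p - 2) / 2) ^ ((p - 2) / p)) * ENNReal.ofReal (b - a) := by
  have hp₂ : 0 < p - 2 := by linarith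
  have hL : 0 < b - a := sub_pos.2 hab
  have hα : -1 < p / (p - 2) - 2 := by
    have : 1 < p / (p - 2) := by rw [lt_div_iff₀ hp₂]; linarith
    linarith
  have hq : p / (p - 2) - 2 + 1 = 2 / (p - 2) := by field_simp; ring
  have hinv : p / (p - 2) * ((p - 2) / p) = 1 := by field_simp
  rw [setLIntegral_carlesonBox_im_rpow hab hα, sub_add_cancel, hq,
    ENNReal.ofReal_rpow_of_nonneg (by positivity) (by positivity),
    ← ENNReal.ofReal_mul (by positivity), div_div_eq_mul_div, mul_div_assoc,
    Real.mul_rpow (by positivity) (by positivity),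
    ← Real.rpow_mul hL.le, hinv, Real.rpow_one, mul_comm]

/-- For `p > 2` and `F` harmonic on the upper half-plane with finite Besov energy
`‖F‖^p = ∫_ℍ |∇F|^p y^(p-2) dm < ∞`, the measure `|∇F|² y dm` satisfies the Carleson
box estimate `∫_{Q_I} |∇F|² y dm ≤ C ‖F‖² |I|`, with `C` depending only on `p`. -/
theorem statement0 (p : ℝ) (hp : 2 < p) :
    ∃ C : ℝ≥0∞, 0 < C ∧ C < ⊤ ∧
      ∀ F : ℂ → ℝ, IsHarmonicOn F UHP → besovEnergy p F < ⊤ →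
        ∀ a b : ℝ, a < b →
          (∫⁻ z in carlesonBox a b, ENNReal.ofReal (‖fderiv ℝ F z‖ ^ 2 * z.im)) ≤
            C * besovEnergy p F ^ (2 / p) * ENNReal.ofReal (b - a) := by
  refine ⟨ENNReal.ofReal (((p - 2) / 2) ^ ((p - 2) / p)),
    ENNReal.ofReal_pos.2 (Real.rpow_pos_of_pos (by linarith) _), ENNReal.ofReal_lt_top,
    fun F _ _ a b hab => ?_⟩
  have him : ∀ᵐ z ∂volume.restrict (carlesonBox a b), 0 < z.im :=
    (ae_restrict_iff' (measurableSet_carlesonBox a b)).2 (ae_of_all _ fun z hz => hz.2.1)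
  have henergy : ∫⁻ z in carlesonBox a b, ENNReal.ofReal (‖fderiv ℝ F z‖ ^ p * z.im ^ (p - 2)) ≤
      besovEnergy p F :=
    lintegral_mono_set fun z hz => hz.2.1
  calc _ ≤ _ := lintegral_sq_mul_le_besov _ hp (measurable_fderiv ℝ F).norm.aemeasurable
          measurable_im.aemeasurable (ae_of_all _ fun _ => norm_nonneg _) him
    _ ≤ besovEnergy p F ^ (2 / p) * _ := by gcongr
    _ = _ := by rw [setLIntegral_carlesonBox_weight_rpow hp hab]; ring
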